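/- arXiv:1606.07864 — 3 statements merged into one kernel-verified Lean document; each statement's English description precedes it below -/
import Mathlib

section
/- Let V be a finite set of size n, let U₁,…,U_r ⊆ V each have size at least q, and let S ⊆ V be obtained by including each element of V independently with probability p = min(x/q, 1) where x = a·ln(rn) + 1 and a ≥ 1. Then with probability at least 1 − 1/n^a, every U_i intersects S and |S| ≤ 3xn/q. -/
/-! A fixed `U i`, of size at least `q`, is missed with probability
`(1 - p) ^ |U i| ≤ e^{-x}`. The Chernoff bound with parameter `1` gives
`P(|S| ≥ 3xn/q) ≤ exp (np(e - 1) - 3xn/q) ≤ e^{-xn/q} ≤ e^{-x}`,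
since `np ≤ xn/q` and `q ≤ n`.
A union bound over these `r + 1` events bounds the failure probability by
`(r + 1) e^{-x} = (r + 1) / (e (rn)^a) ≤ 1 / n^a`. -/

set_option linter.deprecated false

open MeasureTheory ProbabilityTheory Finset Real
open scoped NNReal

noncomputable def bernoulliSample (V : Type*) [Fintype V] (p : ℝ≥0) (hp : p ≤ 1) :
    Measure (V → Bool) :=
  Measure.pi fun _ : V => (PMF.bernoulli p hp).toMeasure

namespace bernoulliSample

variable {V : Type*} [Fintype V] {p : ℝ≥0} (hp : p ≤ 1)

instance : IsProbabilityMeasure (bernoulliSample V p hp) := by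
  unfold bernoulliSample; infer_instance

lemma measureReal_forall_false (s : Finset V) :
    (bernoulliSample V p hp).real {ω | ∀ v ∈ s, ω v = false} = (1 - (p : ℝ)) ^ #s := by
  classical
  have hset : {ω : V → Bool | ∀ v ∈ s, ω v = false} =
      Set.univ.pi fun v => if v ∈ s then {false} else Set.univ := by
    ext ω
    simp only [Set.mem_ofPred_eq, Set.mem_pi, Set.mem_univ, true_implies]
    refine forall_congr' fun v => ?_
    split_ifs with hv <;> simp [hv]
  rw [hset, measureReal_def, bernoulliSample, Measure.pi_pi]
  simp only [apply_ite, measure_univ, Finset.prod_ite_mem, Finset.univ_inter, Finset.prod_const]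
  rw [PMF.toMeasure_apply_singleton _ _ (measurableSet_singleton _), PMF.bernoulli_apply]
  simp [hp]

lemma mgf_card_true (t : ℝ) :
    mgf (fun ω : V → Bool => (#{v | ω v = true} : ℝ)) (bernoulliSample V p hp) t
      = (1 - p + p * exp t) ^ Fintype.card V := by
  classical
  have hexp : ∀ ω : V → Bool,
      exp (t * #{v | ω v = true}) = ∏ v, exp (t * cond (ω v) 1 0) := by
    intro ω
    rw [← exp_sum, ← Finset.mul_sum, Finset.natCast_card_filter]
    congr 2
    exact Finset.sum_congr rfl fun v _ => by cases ω v <;> rfl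
  simp only [mgf, hexp, bernoulliSample]
  rw [integral_fintype_prod_eq_pow (fun b : Bool => exp (t * cond b 1 0)), PMF.integral_eq_sum]
  simp only [Fintype.sum_bool, PMF.bernoulli_apply, cond_true, cond_false, ENNReal.coe_toReal,
    NNReal.coe_sub hp, NNReal.coe_one, smul_eq_mul, mul_one, mul_zero, exp_zero]
  ring

lemma measureReal_le_card_true_le_exp (T : ℝ) :
    (bernoulliSample V p hp).real {ω | T ≤ #{v | ω v = true}}
      ≤ exp (Fintype.card V * p * (exp 1 - 1) - T) := by
  have hmgf : 1 - p + p * exp 1 ≤ exp (p * (exp 1 - 1)) := by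
    linarith [add_one_le_exp (p * (exp 1 - 1))]
  have hbase : 0 ≤ 1 - (p : ℝ) + p * exp 1 := by
    linarith [mul_nonneg p.coe_nonneg (exp_pos 1).le, (show (p : ℝ) ≤ 1 from hp)]
  calc (bernoulliSample V p hp).real {ω | T ≤ #{v | ω v = true}}
      ≤ exp (-1 * T) * (1 - p + p * exp 1) ^ Fintype.card V := by
        rw [← mgf_card_true hp 1]
        exact measure_ge_le_exp_mul_mgf T zero_le_one .of_finite
    _ ≤ exp (-1 * T) * exp (p * (exp 1 - 1)) ^ Fintype.card V := by gcongr
    _ = exp (Fintype.card V * p * (exp 1 - 1) - T) := by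
        rw [← exp_nat_mul, ← exp_add]; ring_nf

lemma measureReal_three_mul_le_card_true_le {m : ℝ} (hm : Fintype.card V * p ≤ m) :
    (bernoulliSample V p hp).real {ω | 3 * m ≤ #{v | ω v = true}} ≤ exp (-m) := by
  refine (measureReal_le_card_true_le_exp hp _).trans (exp_le_exp.2 ?_)
  have hm0 : 0 ≤ m := le_trans (by positivity) hm
  calc Fintype.card V * p * (exp 1 - 1) - 3 * m ≤ m * 2 - 3 * m := by
        gcongr
        · linarith [add_one_le_exp 1]
        · linarith [exp_one_lt_d9]
    _ = -m := by ring

end bernoulliSample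

lemma compl_forall_exists_true_and_card_le_subset {V ι : Type*} [Fintype V]
    (U : ι → Finset V) (T : ℝ) :
    {ω : V → Bool | (∀ i, ∃ v ∈ U i, ω v = true) ∧ (#{v | ω v = true} : ℝ) ≤ T}ᶜ ⊆
      (⋃ i, {ω | ∀ v ∈ U i, ω v = false}) ∪ {ω | T ≤ #{v | ω v = true}} := by
  intro ω hω
  rw [Set.mem_compl_iff, Set.mem_ofPred_eq, not_and_or, not_forall, not_le] at hω
  rcases hω with ⟨i, hmissed⟩ | hlarge
  · refine .inl (Set.mem_iUnion.2 ⟨i, fun v hv => ?_⟩)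
    exact Bool.eq_false_iff.2 fun h => hmissed ⟨v, hv, h⟩
  · exact .inr hlarge.le

lemma one_sub_ofReal_le_of_measureReal_compl_le {Ω : Type*} [MeasurableSpace Ω]
    {μ : Measure Ω} [IsProbabilityMeasure μ] {s : Set Ω} (hs : MeasurableSet s) {ε : ℝ}
    (h : μ.real sᶜ ≤ ε) :
    1 - ENNReal.ofReal ε ≤ μ s := by
  rw [tsub_le_iff_right, ← prob_add_prob_compl (μ := μ) hs, ← ofReal_measureReal (s := sᶜ)]
  gcongr

lemma one_sub_min_div_one_pow_le_exp_neg {x : ℝ} (hx : 0 ≤ x) {q k : ℕ} (hq : 1 ≤ q)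
    (hqk : q ≤ k) : (1 - min (x / q) 1) ^ k ≤ exp (-x) := by
  rcases le_total (x / q) 1 with hle | hge
  · rw [min_eq_left hle]
    have hq0 : (0 : ℝ) < q := by exact_mod_cast hq
    calc (1 - x / q) ^ k ≤ (1 - x / q) ^ q :=
          pow_le_pow_of_le_one (by linarith) (by linarith [div_nonneg hx hq0.le]) hqk
      _ ≤ exp (-(x / q)) ^ q := by
          gcongr
          linarith [add_one_le_exp (-(x / q))]
      _ = exp (-x) := by rw [← exp_nat_mul]; field_simp
  · rw [min_eq_right hge, sub_self, zero_pow (by omega)]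
    positivity

lemma natCast_add_one_mul_exp_neg_le {r n : ℕ} (hr : 1 ≤ r) (hn : 1 ≤ n) {a : ℝ}
    (ha : 1 ≤ a) :
    (r + 1) * exp (-(a * log (r * n) + 1)) ≤ 1 / (n : ℝ) ^ a := by
  have hr1 : (1 : ℝ) ≤ r := by exact_mod_cast hr
  have hn0 : (0 : ℝ) < n := by exact_mod_cast hn
  have hexp : exp (-(a * log (r * n) + 1)) = exp (-1) / ((r : ℝ) ^ a * (n : ℝ) ^ a) := by
    rw [← mul_rpow (by positivity) hn0.le, rpow_def_of_pos (by positivity), mul_comm (log _) a,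
      neg_add, exp_add, exp_neg (a * _), inv_mul_eq_div]
  have hra : (r : ℝ) ≤ r ^ a := by
    simpa using rpow_le_rpow_of_exponent_le hr1 ha
  have h2e : 2 ≤ exp 1 := by linarith [add_one_le_exp 1]
  have hkey : (r + 1) * exp (-1) ≤ r ^ a := by
    rw [exp_neg, ← div_eq_mul_inv, div_le_iff₀ (exp_pos 1)]
    nlinarith
  calc (r + 1) * exp (-(a * log (r * n) + 1)) = (r + 1) * exp (-1) / r ^ a / n ^ a := by
        rw [hexp]; ring
    _ ≤ 1 / n ^ a := by
        gcongr
        exact (div_le_one (by positivity)).2 hkey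

open MeasureTheory in
theorem stmt2_general {V : Type*} [Fintype V] (n r q : ℕ) (a : ℝ)
    (hn : Fintype.card V = n) (hq : 1 ≤ q) (hr : 1 ≤ r) (ha : 1 ≤ a)
    (U : Fin r → Finset V) (hU : ∀ i, q ≤ (U i).card)
    (x p : ℝ) (hx : x = a * Real.log (r * n) + 1) (hp : p = min (x / q) 1)
    (μ : Measure (V → Bool))
    (hμ : μ = Measure.pi fun _ : V =>
      (PMF.bernoulli (Real.toNNReal p)
        (Real.toNNReal_le_one.mpr (le_of_eq_of_le hp (min_le_right _ _)))).toMeasure) :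
    μ {ω | (∀ i, ∃ v ∈ U i, ω v = true) ∧
        ((Finset.univ.filter fun v => ω v = true).card : ℝ) ≤ 3 * x * n / q}
      ≥ 1 - ENNReal.ofReal (1 / (n : ℝ) ^ a) := by
  have hqn : q ≤ n := hn ▸ (hU ⟨0, hr⟩).trans (card_le_univ _)
  have hx0 : 0 ≤ x := by
    have : 0 ≤ log ((r : ℝ) * n) := log_nonneg (by norm_cast; nlinarith)
    rw [hx]; positivity
  have hp0 : 0 ≤ p := hp ▸ le_min (by positivity) zero_le_one
  have hpp : (p.toNNReal : ℝ) = p := Real.coe_toNNReal p hp0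
  change μ = bernoulliSample V _ _ at hμ
  have : IsProbabilityMeasure μ := hμ ▸ inferInstance
  have hmiss : ∀ i, μ.real {ω | ∀ v ∈ U i, ω v = false} ≤ exp (-x) := fun i => by
    rw [hμ, bernoulliSample.measureReal_forall_false, hpp, hp]
    exact one_sub_min_div_one_pow_le_exp_neg hx0 hq (hU i)
  have hbig : μ.real {ω | 3 * x * n / q ≤ #{v | ω v = true}} ≤ exp (-x) := by
    have hxn : x ≤ x * n / q := by
      rw [le_div_iff₀ (by exact_mod_cast hq)]
      exact mul_le_mul_of_nonneg_left (by exact_mod_cast hqn) hx0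
    rw [hμ, show 3 * x * n / q = 3 * (x * n / q) by ring]
    refine (bernoulliSample.measureReal_three_mul_le_card_true_le _ ?_).trans
      (exp_le_exp.2 (neg_le_neg hxn))
    rw [hpp, hn, mul_comm x, mul_div_assoc]
    exact mul_le_mul_of_nonneg_left (hp ▸ min_le_left _ _) (Nat.cast_nonneg n)
  refine one_sub_ofReal_le_of_measureReal_compl_le (Set.toFinite _).measurableSet ?_
  calc _ ≤ μ.real ((⋃ i, {ω | ∀ v ∈ U i, ω v = false})
            ∪ {ω | 3 * x * n / q ≤ #{v | ω v = true}}) :=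
        measureReal_mono (compl_forall_exists_true_and_card_le_subset U _)
    _ ≤ ∑ i, μ.real {ω | ∀ v ∈ U i, ω v = false}
          + μ.real {ω | 3 * x * n / q ≤ #{v | ω v = true}} :=
        (measureReal_union_le _ _).trans (by gcongr; exact measureReal_iUnion_fintype_le _)
    _ ≤ ∑ _i : Fin r, exp (-x) + exp (-x) := by gcongr with i; exact hmiss i
    _ = (r + 1) * exp (-x) := by
        simp only [sum_const, card_univ, Fintype.card_fin, nsmul_eq_mul]; ring
    _ ≤ 1 / (n : ℝ) ^ a := hx ▸ natCast_add_one_mul_exp_neg_le hr (hq.trans hqn) ha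

open MeasureTheory in
/-- Hitting set lemma: sampling each element of `V` independently with probability
`p = min(x/q, 1)`, `x = a ln(rn) + 1`, hits every one of the `r` sets `U i` (each of
size `≥ q`) and has size at most `3xn/q`, with probability at least `1 - 1/n^a`. -/
theorem stmt2 {V : Type*} [Fintype V] (n r q : ℕ) (a : ℝ)
    (hn : Fintype.card V = n) (hn2 : 2 ≤ n) (hq : 1 ≤ q) (hr : 1 ≤ r) (ha : 1 ≤ a)
    (U : Fin r → Finset V) (hU : ∀ i, q ≤ (U i).card)
    (x p : ℝ) (hx : x = a * Real.log (r * n) + 1) (hp : p = min (x / q) 1)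
    (μ : Measure (V → Bool))
    (hμ : μ = Measure.pi fun _ : V =>
      (PMF.bernoulli (Real.toNNReal p)
        (Real.toNNReal_le_one.mpr (le_of_eq_of_le hp (min_le_right _ _)))).toMeasure) :
    μ {ω | (∀ i, ∃ v ∈ U i, ω v = true) ∧
        ((Finset.univ.filter fun v => ω v = true).card : ℝ) ≤ 3 * x * n / q}
      ≥ 1 - ENNReal.ofReal (1 / (n : ℝ) ^ a) :=
  stmt2_general n r q a hn hq hr ha U hU x p hx hp μ hμ
end

section
/- Let G = (V,E) be an undirected graph with an orientation G⃗, let S ⊆ V, and suppose A ⊆ E contains: (1) for every vertex v adjacent to some vertex of S, an edge {v, c(v)} to some neighbor c(v) ∈ S of v; and (2) for every vertex v and every s ∈ S with In(v, s) := {u : (u,v) ∈ E⃗, c(u) = s} nonempty, an edge {u', v} for some u' ∈ In(v, s). Then for every oriented edge (u,v) ∈ E⃗ such that u is adjacent to some vertex of S, we have d_A(u,v) ≤ 3. -/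
theorem stmt5_general {V : Type*} (G A : SimpleGraph V)
    (D : V → V → Prop)
    (S : Set V) (c : V → Option V)
    (hc : ∀ v : V, (∃ s ∈ S, G.Adj v s) → ∃ s ∈ S, c v = some s ∧ G.Adj v s)
    (hrule1 : ∀ v s, c v = some s → A.Adj v s)
    (hrule2 : ∀ v s u, D u v → c u = some s →
      ∃ u', D u' v ∧ c u' = some s ∧ A.Adj u' v) :
    ∀ u v, D u v → (∃ s ∈ S, G.Adj u s) → A.edist u v ≤ 3 := by
  intro u v huv hS
  obtain ⟨s, -, hcu, -⟩ := hc u hS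
  obtain ⟨u', -, hcu', hu'v⟩ := hrule2 v s u huv hcu
  let w : A.Walk u v :=
    .cons (hrule1 u s hcu) <| .cons (hrule1 u' s hcu').symm <| .cons hu'v .nil
  simpa [w] using w.edist_le

/-- Stretch-3 partial spanner lemma: with a clustering `c` into centers `S`, if `A`
contains an edge from every clustered vertex to its center, and for every vertex `v`
and center `s` with `In(v,s) ≠ ∅` an edge from some `u' ∈ In(v,s)` to `v`, then every
oriented edge `(u,v)` whose tail `u` is adjacent to `S` satisfies `d_A(u,v) ≤ 3`. -/
theorem stmt5 {V : Type*} (G A : SimpleGraph V) (hAG : A ≤ G)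
    (D : V → V → Prop)
    (hD : ∀ u v, D u v → G.Adj u v)
    (hcov : ∀ u v, G.Adj u v → D u v ∨ D v u)
    (S : Set V) (c : V → Option V)
    (hc : ∀ v : V, (∃ s ∈ S, G.Adj v s) → ∃ s ∈ S, c v = some s ∧ G.Adj v s)
    (hrule1 : ∀ v s, c v = some s → A.Adj v s)
    (hrule2 : ∀ v s u, D u v → c u = some s →
      ∃ u', D u' v ∧ c u' = some s ∧ A.Adj u' v) :
    ∀ u v, D u v → (∃ s ∈ S, G.Adj u s) → A.edist u v ≤ 3 :=
  stmt5_general G A D S c hc hrule1 hrule2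
end

section
/- Let G = (V,E) be an undirected graph with an orientation G⃗, let S ⊆ V with a clustering c : V → S ∪ {⊥} assigning to each vertex adjacent to S one of its neighbors in S. Suppose A ⊆ E contains: (1) for every clustered vertex v, the edge {v, c(v)}; and (2) for every pair s_i, s_j ∈ S with In(s_i, s_j) := {(u,v) ∈ E⃗ : c(u) = s_j, c(v) = s_i} nonempty, some edge {u', v'} with (u',v') ∈ In(s_i, s_j). Then for every oriented edge (u,v) ∈ E⃗ such that both u and v are clustered, d_A(u,v) ≤ 5. -/
lemma SimpleGraph.edist_le_five_of_adj_chain {V : Type*} {A : SimpleGraph V}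
    {u s u' v' t v : V} (h₁ : A.Adj u s) (h₂ : A.Adj u' s) (h₃ : A.Adj u' v')
    (h₄ : A.Adj v' t) (h₅ : A.Adj v t) : A.edist u v ≤ 5 :=
  (A.edist_le (.cons h₁ <| .cons h₂.symm <| .cons h₃ <| .cons h₄ <| .cons h₅.symm .nil)).trans
    (by norm_num)

-- The path `u — c u — u' — v' — c v — v`, where `(u', v')` is the edge `A` keeps for the cluster pair of `(u, v)`.
theorem stmt6_general {V : Type*} (G A : SimpleGraph V)
    (D : V → V → Prop)
    (S : Set V) (c : V → Option V)
    (hcS : ∀ v s, c v = some s → s ∈ S ∧ G.Adj v s)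
    (hrule1 : ∀ v s, c v = some s → A.Adj v s)
    (hrule2 : ∀ si sj, si ∈ S → sj ∈ S →
      (∃ u v, D u v ∧ c u = some sj ∧ c v = some si) →
      ∃ u' v', D u' v' ∧ c u' = some sj ∧ c v' = some si ∧ A.Adj u' v') :
    ∀ u v su sv, D u v → c u = some su → c v = some sv → A.edist u v ≤ 5 := by
  intro u v su sv hDuv hcu hcv
  obtain ⟨u', v', -, hcu', hcv', hA'⟩ :=
    hrule2 sv su (hcS v sv hcv).1 (hcS u su hcu).1 ⟨u, v, hDuv, hcu, hcv⟩
  exact SimpleGraph.edist_le_five_of_adj_chain (hrule1 u su hcu) (hrule1 u' su hcu') hA'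
    (hrule1 v' sv hcv') (hrule1 v sv hcv)

/-- Stretch-5 partial spanner lemma: with a clustering `c` into centers `S`, if `A`
contains an edge from every clustered vertex to its center, and for every pair of
centers `s_i, s_j` with `In(s_i, s_j) ≠ ∅` one edge `{u',v'}` with `(u',v') ∈ In(s_i,s_j)`,
then every oriented edge `(u,v)` with both endpoints clustered satisfies `d_A(u,v) ≤ 5`. -/
theorem stmt6 {V : Type*} (G A : SimpleGraph V) (hAG : A ≤ G)
    (D : V → V → Prop)
    (hD : ∀ u v, D u v → G.Adj u v)
    (hcov : ∀ u v, G.Adj u v → D u v ∨ D v u)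
    (S : Set V) (c : V → Option V)
    (hcS : ∀ v s, c v = some s → s ∈ S ∧ G.Adj v s)
    (hrule1 : ∀ v s, c v = some s → A.Adj v s)
    (hrule2 : ∀ si sj, si ∈ S → sj ∈ S →
      (∃ u v, D u v ∧ c u = some sj ∧ c v = some si) →
      ∃ u' v', D u' v' ∧ c u' = some sj ∧ c v' = some si ∧ A.Adj u' v') :
    ∀ u v su sv, D u v → c u = some su → c v = some sv → A.edist u v ≤ 5 :=
  stmt6_general G A D S c hcS hrule1 hrule2
end
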